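/- arXiv:1412.7699 — 4 statements merged into one kernel-verified Lean document; each statement's English description precedes it below -/
import Mathlib

section
/- Let E be a finite set, ~ an equivalence relation on E, and P a stochastic matrix on E that is lumpable with respect to ~, with quotient matrix P̄([x],[y]) := ∑_{y'∈[y]} P(x,y'). If (X_t) is a Markov chain on E with transition matrix P, then ([X_t]) is a Markov chain on the quotient set Ē with transition matrix P̄. -/
open Finset MeasureTheory


private def extd {E : Type*} {t : ℕ} (v : Fin (t+1) → E) : ℕ → E :=
  fun u => if h : u < t + 1 then v ⟨u, h⟩ else v 0

private lemma measC {E Ω : Type*} [MeasurableSpace Ω] [MeasurableSpace E]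
    [MeasurableSingletonClass E] (X : ℕ → Ω → E) (hX : ∀ t, Measurable (X t))
    (t : ℕ) (f : ℕ → E) : MeasurableSet {ω | ∀ u ≤ t, X u ω = f u} := by
  have h : {ω | ∀ u ≤ t, X u ω = f u} = ⋂ u ∈ Set.Iic t, (X u) ⁻¹' {f u} := by
    ext ω; simp [Set.mem_iInter]
  rw [h]
  exact MeasurableSet.biInter (Set.to_countable _)
    (fun u _ => (hX u) (measurableSet_singleton _))

private lemma decomp {E : Type*} [Fintype E] (s : Setoid E) [DecidableRel s.r]
    {Ω : Type*} [MeasurableSpace Ω] [MeasurableSpace E] [MeasurableSingletonClass E]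
    (μ : Measure Ω) (X : ℕ → Ω → E) (hX : ∀ t, Measurable (X t)) (t : ℕ) (g : ℕ → E) :
    μ {ω | ∀ u ≤ t, s.r (X u ω) (g u)} =
      ∑ v ∈ Finset.univ.filter (fun v : Fin (t+1) → E => ∀ u, s.r (v u) (g (u : ℕ))),
        μ {ω | ∀ u ≤ t, X u ω = extd v u} := by
  classical
  rw [← measure_biUnion_finset ?_ (fun v _ => measC X hX t (extd v))]
  · congr 1
    ext ω
    simp only [Set.mem_iUnion, Finset.mem_filter, Finset.mem_univ, true_and, Set.mem_setOf_eq]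
    constructor
    · intro h
      refine ⟨fun i => X i ω, fun u => h u (Nat.lt_succ_iff.mp u.isLt), fun u hu => ?_⟩
      simp [extd, Nat.lt_succ_of_le hu]
    · rintro ⟨v, hv, hω⟩ u hu
      rw [hω u hu]
      simpa [extd, Nat.lt_succ_of_le hu] using hv ⟨u, Nat.lt_succ_of_le hu⟩
  · intro v hv v' hv' hne
    simp only [Function.onFun]
    rw [Set.disjoint_left]
    intro ω h1 h2
    apply hne
    funext i
    have e1 := h1 i (Nat.lt_succ_iff.mp i.isLt)
    have e2 := h2 i (Nat.lt_succ_iff.mp i.isLt)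
    simp only [extd, i.isLt, dif_pos, Fin.eta] at e1 e2
    rw [← e1, ← e2]

/-- If `P` is a stochastic matrix on a finite set `E` lumpable with respect to an
equivalence relation, and `(X_t)` is a Markov chain with transition matrix `P`
(stated via its finite-dimensional cylinder probabilities), then the quotient
process `([X_t])` is a Markov chain on the quotient with the lumped transition
matrix `P̄([x],[y]) = ∑_{y'∈[y]} P(x,y')`. -/
theorem stmt1 {E : Type*} [Fintype E] (s : Setoid E) [DecidableRel s.r]
    (P : E → E → ℝ)
    (hnonneg : ∀ x y, 0 ≤ P x y)
    (hrow : ∀ x, ∑ y, P x y = 1)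
    (hlump : ∀ x x' y, s.r x x' →
      ∑ y' ∈ Finset.univ.filter (fun y' => s.r y' y), P x y' =
      ∑ y' ∈ Finset.univ.filter (fun y' => s.r y' y), P x' y')
    {Ω : Type*} [MeasurableSpace Ω] [MeasurableSpace E] [MeasurableSingletonClass E]
    (μ : Measure Ω) [IsProbabilityMeasure μ]
    (X : ℕ → Ω → E) (hX : ∀ t, Measurable (X t))
    (hmarkov : ∀ (t : ℕ) (f : ℕ → E),
      μ {ω | ∀ u ≤ t + 1, X u ω = f u} =
        μ {ω | ∀ u ≤ t, X u ω = f u} * ENNReal.ofReal (P (f t) (f (t + 1)))) :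
    ∀ (t : ℕ) (g : ℕ → E),
      μ {ω | ∀ u ≤ t + 1, s.r (X u ω) (g u)} =
        μ {ω | ∀ u ≤ t, s.r (X u ω) (g u)} *
          ENNReal.ofReal
            (∑ y' ∈ Finset.univ.filter (fun y' => s.r y' (g (t + 1))), P (g t) y') := by
  intro t g
  classical
  rw [decomp s μ X hX (t+1) g, decomp s μ X hX t g]
  have key : ∀ v : Fin (t+1+1) → E,
      μ {ω | ∀ u ≤ t+1, X u ω = extd v u} =
        μ {ω | ∀ u ≤ t, X u ω = extd (Fin.init v) u} *
          ENNReal.ofReal (P (Fin.init v (Fin.last t)) (v (Fin.last (t+1)))) := by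
    intro v
    rw [hmarkov t (extd v)]
    have hset : {ω | ∀ u ≤ t, X u ω = extd v u} =
        {ω | ∀ u ≤ t, X u ω = extd (Fin.init v) u} := by
      have hagree : ∀ u ≤ t, extd v u = extd (Fin.init v) u := by
        intro u hu
        have h1 : u < t + 1 := Nat.lt_succ_of_le hu
        have h2 : u < t + 2 := by omega
        simp only [extd, h1, h2, dif_pos, Fin.init]
        congr 1
      ext ω
      constructor <;> intro h u hu <;> rw [h u hu] <;> [exact hagree u hu; exact (hagree u hu).symm]
    rw [hset]
    have ea : extd v t = Fin.init v (Fin.last t) := by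
      have hcast : (Fin.last t).castSucc = (⟨t, by omega⟩ : Fin (t+1+1)) := by
        ext; simp
      simp only [extd, Fin.init, hcast]
      rw [dif_pos (by omega)]
    have eb : extd v (t+1) = v (Fin.last (t+1)) := by
      have hcast : (Fin.last (t+1)) = (⟨t+1, by omega⟩ : Fin (t+1+1)) := by
        ext; simp
      simp only [extd, hcast]
      rw [dif_pos (by omega)]
    rw [ea, eb]
  rw [Finset.sum_congr rfl (fun v _ => key v)]
  have reindex :
      ∑ v ∈ Finset.univ.filter (fun v : Fin (t+1+1) → E => ∀ u, s.r (v u) (g (u : ℕ))),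
        μ {ω | ∀ u ≤ t, X u ω = extd (Fin.init v) u} *
          ENNReal.ofReal (P (Fin.init v (Fin.last t)) (v (Fin.last (t+1)))) =
      ∑ p ∈ (Finset.univ.filter (fun w : Fin (t+1) → E => ∀ u, s.r (w u) (g (u : ℕ)))) ×ˢ
            (Finset.univ.filter (fun y' => s.r y' (g (t + 1)))),
        μ {ω | ∀ u ≤ t, X u ω = extd p.1 u} *
          ENNReal.ofReal (P (p.1 (Fin.last t)) p.2) := by
    refine Finset.sum_nbij' (fun v => (Fin.init v, v (Fin.last (t+1))))
      (fun p => Fin.snoc p.1 p.2) ?_ ?_ ?_ ?_ ?_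
    · intro v hv
      simp only [Finset.mem_filter, Finset.mem_univ, true_and, Finset.mem_product] at hv ⊢
      constructor
      · intro u
        simpa [Fin.init] using hv u.castSucc
      · simpa using hv (Fin.last (t+1))
    · intro p hp
      simp only [Finset.mem_filter, Finset.mem_univ, true_and, Finset.mem_product] at hp ⊢
      intro u
      refine Fin.lastCases ?_ ?_ u
      · simpa using hp.2
      · intro i
        simpa [Fin.snoc_castSucc] using hp.1 i
    · intro v _
      exact Fin.snoc_init_self v
    · intro p _
      simp [Fin.init_snoc, Fin.snoc_last]
    · intro v _
      rfl
  rw [reindex, Finset.sum_product]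
  have step : ∀ w ∈ Finset.univ.filter (fun w : Fin (t+1) → E => ∀ u, s.r (w u) (g (u : ℕ))),
      ∑ y ∈ Finset.univ.filter (fun y' => s.r y' (g (t + 1))),
        μ {ω | ∀ u ≤ t, X u ω = extd w u} * ENNReal.ofReal (P (w (Fin.last t)) y) =
      μ {ω | ∀ u ≤ t, X u ω = extd w u} *
        ENNReal.ofReal (∑ y' ∈ Finset.univ.filter (fun y' => s.r y' (g (t + 1))), P (g t) y') := by
    intro w hw
    rw [← Finset.mul_sum, ← ENNReal.ofReal_sum_of_nonneg (fun y _ => hnonneg _ y)]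
    congr 2
    refine hlump (w (Fin.last t)) (g t) (g (t+1)) ?_
    simpa using (Finset.mem_filter.mp hw).2 (Fin.last t)
  rw [Finset.sum_congr rfl step, ← Finset.sum_mul]
end

section
/- Let P be a stochastic matrix on a finite set E and G a group of permutations of E such that P(x,y) = P(x_σ, y_σ) for all σ ∈ G and x, y ∈ E. Define x ~ y iff y = x_σ for some σ ∈ G. Then P is lumpable with respect to ~, i.e., for all x, x', y with x ~ x', ∑_{y'∈[y]} P(x,y') = ∑_{y'∈[y]} P(x',y'). -/
open Finset

open scoped Classical in
/-- If a stochastic matrix `P` on a finite set `E` is invariant under a group `G` of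
permutations of `E`, then `P` is lumpable with respect to the orbit equivalence relation
`x ~ y ↔ y = x_σ for some σ ∈ G`. -/
theorem stmt3 {E : Type*} [Fintype E] (P : E → E → ℝ)
    (hnonneg : ∀ x y, 0 ≤ P x y)
    (hrow : ∀ x, ∑ y, P x y = 1)
    (G : Subgroup (Equiv.Perm E))
    (hinv : ∀ σ ∈ G, ∀ x y, P x y = P (σ x) (σ y)) :
    ∀ x x' y : E, (∃ σ ∈ G, x' = σ x) →
      ∑ y' ∈ Finset.univ.filter (fun y' => ∃ σ ∈ G, y' = σ y), P x y' =
      ∑ y' ∈ Finset.univ.filter (fun y' => ∃ σ ∈ G, y' = σ y), P x' y' := by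
  rintro x x' y ⟨σ, hσ, rfl⟩
  refine Finset.sum_bij (fun y' _ => σ y') ?_ ?_ ?_ ?_
  · rintro a ha
    simp only [mem_filter, mem_univ, true_and] at ha ⊢
    obtain ⟨τ, hτ, rfl⟩ := ha
    exact ⟨σ * τ, G.mul_mem hσ hτ, rfl⟩
  · intro a _ b _ h
    exact σ.injective h
  · rintro b hb
    simp only [mem_filter, mem_univ, true_and] at hb
    obtain ⟨τ, hτ, rfl⟩ := hb
    refine ⟨(σ⁻¹ * τ) y, ?_, ?_⟩
    · simp only [mem_filter, mem_univ, true_and]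
      exact ⟨σ⁻¹ * τ, G.mul_mem (G.inv_mem hσ) hτ, rfl⟩
    · simp [Equiv.Perm.mul_apply]
  · intro a _
    exact hinv σ hσ x a
end

section
/- For N = 4, the equivalence relation on E = {0,1}^4 defined by 'same number of 1s' fails the lumpability condition for the game-B transition matrix P_B in general: for state x = 0011 the probability of staying in the class {states with exactly two 1s} equals (p_1 + q_1)/2 = 1/2, while for state x = 0101 it equals (p_0 + q_2)/2, and these differ whenever p_0 ≠ p_2. -/
open Finset

/-- `m_i(x) = x_{i-1} + x_{i+1}` (cyclic indices). -/
def nbrWinners {N : ℕ} (x : ZMod N → Bool) (i : ZMod N) : ℕ :=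
  (if x (i - 1) then 1 else 0) + (if x (i + 1) then 1 else 0)

/-- The game-B transition matrix on `E = {0,1}^N`. -/
noncomputable def gameB (N : ℕ) [NeZero N] (p : ℕ → ℝ) (x y : ZMod N → Bool) : ℝ :=
  (1 / N) * ∑ i : ZMod N,
      (if y = Function.update x i (!x i) then
        (if x i then 1 - p (nbrWinners x i) else p (nbrWinners x i)) else 0)
    + (if y = x then
        (1 / N) * ∑ i : ZMod N,
          (if x i then p (nbrWinners x i) else 1 - p (nbrWinners x i))
      else 0)

/-- The state `(x_1, x_2, x_3, x_4) ∈ {0,1}^4` (players indexed by `ZMod 4`,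
player 4 corresponding to `0`). -/
def st (a b c d : Bool) : ZMod 4 → Bool :=
  fun i => if i = 1 then a else if i = 2 then b else if i = 3 then c else d


lemma sum_zmod4 {M} [AddCommMonoid M] (f : ZMod 4 → M) :
    ∑ i : ZMod 4, f i = f 0 + f 1 + f 2 + f 3 := Fin.sum_univ_four f

lemma class_eq :
    (Finset.univ.filter (fun y : ZMod 4 → Bool =>
        (Finset.univ.filter (fun i => y i = true)).card = 2)) =
      {st true true false false, st true false true false, st true false false true,
       st false true true false, st false true false true, st false false true true} := by
  decide

/-- For `N = 4`
, the "same number of 1s" equivalence relation fails lumpability for the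
game-B transition matrix: from `x = 0011` the probability of staying in the class of
states with exactly two 1s equals `(p_1 + q_1)/2 = 1/2`, while from `x = 0101` it equals
`(p_0 + q_2)/2`, and these differ whenever `p_0 ≠ p_2`. -/
theorem stmt10 (p0 p1 p2 : ℝ)
    (h0 : 0 ≤ p0 ∧ p0 ≤ 1) (h1 : 0 ≤ p1 ∧ p1 ≤ 1) (h2 : 0 ≤ p2 ∧ p2 ≤ 1) :
    let p : ℕ → ℝ := fun m => if m = 0 then p0 else if m = 1 then p1 else p2
    let twoOnes : Finset (ZMod 4 → Bool) :=
      Finset.univ.filter (fun y => (Finset.univ.filter (fun i => y i = true)).card = 2)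
    (∑ y ∈ twoOnes, gameB 4 p (st false false true true) y) = (p1 + (1 - p1)) / 2 ∧
    (∑ y ∈ twoOnes, gameB 4 p (st false false true true) y) = 1 / 2 ∧
    (∑ y ∈ twoOnes, gameB 4 p (st false true false true) y) = (p0 + (1 - p2)) / 2 ∧
    (p0 ≠ p2 →
      (∑ y ∈ twoOnes, gameB 4 p (st false false true true) y) ≠
      (∑ y ∈ twoOnes, gameB 4 p (st false true false true) y)) := by
  intro p twoOnes
  have hA : (∑ y ∈ twoOnes, gameB 4 p (st false false true true) y) = (p1 + (1 - p1)) / 2 := by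
    show (∑ y ∈ _, gameB 4 p (st false false true true) y) = _
    rw [show twoOnes = _ from class_eq, Finset.sum_insert (by decide), Finset.sum_insert (by decide),
        Finset.sum_insert (by decide), Finset.sum_insert (by decide),
        Finset.sum_insert (by decide), Finset.sum_singleton]
    simp only [gameB, sum_zmod4]
    norm_num (config := { decide := true })
      [show nbrWinners (st false false true true) 0 = 1 from by decide,
       show nbrWinners (st false false true true) 1 = 1 from by decide,
       show nbrWinners (st false false true true) 2 = 1 from by decide,
       show nbrWinners (st false false true true) 3 = 1 from by decide,
       show (st false false true true) 0 = true from by decide,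
       show (st false false true true) 1 = false from by decide,
       show (st false false true true) 2 = false from by decide,
       show (st false false true true) 3 = true from by decide, p]
    ring
  have hB : (∑ y ∈ twoOnes, gameB 4 p (st false true false true) y) = (p0 + (1 - p2)) / 2 := by
    show (∑ y ∈ _, gameB 4 p (st false true false true) y) = _
    rw [show twoOnes = _ from class_eq, Finset.sum_insert (by decide), Finset.sum_insert (by decide),
        Finset.sum_insert (by decide), Finset.sum_insert (by decide),
        Finset.sum_insert (by decide), Finset.sum_singleton]
    simp only [gameB, sum_zmod4]
    norm_num (config := { decide := true })
      [show nbrWinners (st false true false true) 0 = 0 from by decide,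
       show nbrWinners (st false true false true) 1 = 2 from by decide,
       show nbrWinners (st false true false true) 2 = 0 from by decide,
       show nbrWinners (st false true false true) 3 = 2 from by decide,
       show (st false true false true) 0 = true from by decide,
       show (st false true false true) 1 = false from by decide,
       show (st false true false true) 2 = true from by decide,
       show (st false true false true) 3 = false from by decide, p]
    ring
  refine ⟨hA, by rw [hA]; ring, hB, fun hne heq => hne ?_⟩
  rw [hA, hB] at heq
  linarith
end

section
/- For N = 4 and the dihedral-orbit equivalence classes ordered as {0000}, {0001,…}, {0011,…}, {0101,1010}, {0111,…}, {1111}, the lumped transition matrix of game A' equals (1/4) times the matrix with rows (0,4,0,0,0,0), (0,2,1,1,0,0), (0,1,1,1,1,0), (0,0,2,2,0,0), (0,0,1,1,2,0), (0,0,0,0,4,0). -/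
open Finset

/-- `x^{i,d}` for `d = ±1` (cyclic indices in `ZMod 4`). -/
def moveA (x : ZMod 4 → Bool) (i d : ZMod 4) : ZMod 4 → Bool :=
  Function.update (Function.update x i false) (i + d) true

/-- The game-A' transition matrix on `{0,1}^4`:
`P_{A'}(x,y) = (1/8) ∑_{i=1}^4 [δ(x^{i,-1},y) + δ(x^{i,1},y)]`. -/
noncomputable def gameA'4 (x y : ZMod 4 → Bool) : ℝ :=
  (1 / 8) * ∑ i : ZMod 4,
    ((if moveA x i (-1) = y then 1 else 0) + (if moveA x i 1 = y then 1 else 0))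

/-- The dihedral group of order 8 acting on the circle `ZMod 4`. -/
def dihedral4 : Subgroup (Equiv.Perm (ZMod 4)) :=
  Subgroup.closure {Equiv.addLeft 1, (Equiv.neg (ZMod 4)).trans (Equiv.addLeft 1)}

/-- Representatives of the six dihedral orbit classes, ordered as
`{0000}`, `{0001,…}`, `{0011,…}`, `{0101,…}`, `{0111,…}`, `{1111}`. -/
def reps : Fin 6 → (ZMod 4 → Bool) :=
  ![st false false false false, st false false false true, st false false true true,
    st false true false true, st false true true true, st true true true true]

/-- explicit orbit-class function -/
def orbclass (x : ZMod 4 → Bool) : Fin 6 :=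
  let n := (Finset.univ.filter (fun i => x i)).card
  if n = 0 then 0 else if n = 1 then 1 else if n = 3 then 4 else if n = 4 then 5
  else if x 0 = x 2 then 3 else 2

def cntA (x y : ZMod 4 → Bool) : ℕ :=
  ∑ i : ZMod 4,
    ((if moveA x i (-1) = y then 1 else 0) + (if moveA x i 1 = y then 1 else 0))

def mNat : Fin 6 → Fin 6 → ℕ :=
  ![![0, 4, 0, 0, 0, 0], ![0, 2, 1, 1, 0, 0], ![0, 1, 1, 1, 1, 0],
    ![0, 0, 2, 2, 0, 0], ![0, 0, 1, 1, 2, 0], ![0, 0, 0, 0, 4, 0]]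

abbrev rr : Equiv.Perm (ZMod 4) := Equiv.addLeft 1
abbrev ss : Equiv.Perm (ZMod 4) := (Equiv.neg (ZMod 4)).trans (Equiv.addLeft 1)

def cands : List (Equiv.Perm (ZMod 4)) :=
  [1, rr, rr * rr, rr * rr * rr, ss, ss * rr, ss * rr * rr, ss * rr * rr * rr]

lemma rr_mem : rr ∈ dihedral4 :=
  Subgroup.subset_closure (by simp)

lemma ss_mem : ss ∈ dihedral4 :=
  Subgroup.subset_closure (by simp)

lemma cands_mem : ∀ σ ∈ cands, σ ∈ dihedral4 := by
  intro σ hσ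
  simp only [cands, List.mem_cons, List.not_mem_nil, or_false] at hσ
  rcases hσ with h|h|h|h|h|h|h|h <;> subst h
  · exact one_mem _
  · exact rr_mem
  · exact mul_mem rr_mem rr_mem
  · exact mul_mem (mul_mem rr_mem rr_mem) rr_mem
  · exact ss_mem
  · exact mul_mem ss_mem rr_mem
  · exact mul_mem (mul_mem ss_mem rr_mem) rr_mem
  · exact mul_mem (mul_mem (mul_mem ss_mem rr_mem) rr_mem) rr_mem

lemma orbclass_gen : ∀ σ ∈ ({rr, ss} : Set (Equiv.Perm (ZMod 4))),
    ∀ z : ZMod 4 → Bool, orbclass (z ∘ σ) = orbclass z := by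
  intro σ hσ
  rcases hσ with h|h <;> subst h <;> decide

lemma orbclass_comp (σ : Equiv.Perm (ZMod 4)) (hσ : σ ∈ dihedral4) :
    ∀ z : ZMod 4 → Bool, orbclass (z ∘ σ) = orbclass z := by
  refine Subgroup.closure_induction (fun τ hτ => orbclass_gen τ hτ) (by intro z; rfl)
    ?_ ?_ hσ
  · intro a b _ _ ha hb z
    have : z ∘ (a * b) = (z ∘ a) ∘ b := by
      funext t; simp [Equiv.Perm.mul_apply, Function.comp]
    rw [this, hb, ha]
  · intro a _ ha z
    have := ha (z ∘ ⇑a⁻¹)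
    have h2 : (z ∘ ⇑a⁻¹) ∘ ⇑a = z := by
      funext t; simp
    rw [h2] at this
    exact this.symm

lemma exists_cand : ∀ y : ZMod 4 → Bool, ∃ σ ∈ cands, y = reps (orbclass y) ∘ σ := by
  decide

lemma orbclass_reps : ∀ l : Fin 6, orbclass (reps l) = l := by decide

lemma orbit_iff (l : Fin 6) (y : ZMod 4 → Bool) :
    (∃ σ ∈ dihedral4, y = reps l ∘ σ) ↔ orbclass y = l := by
  constructor
  · rintro ⟨σ, hσ, rfl⟩
    rw [orbclass_comp σ hσ, orbclass_reps]
  · rintro rfl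
    obtain ⟨σ, hσ, hy⟩ := exists_cand y
    exact ⟨σ, cands_mem σ hσ, hy⟩

lemma key : ∀ (x : ZMod 4 → Bool) (l : Fin 6),
    ∑ y ∈ Finset.univ.filter (fun y => orbclass y = l), cntA x y
      = 2 * mNat (orbclass x) l := by
  decide

lemma gameA'4_eq (x y : ZMod 4 → Bool) : gameA'4 x y = (cntA x y : ℝ) / 8 := by
  unfold gameA'4 cntA
  push_cast
  ring

open scoped Classical in
/-- For `N = 4`, the lumped transition matrix of game A' on the six dihedral orbit
classes equals `(1/4)` times the matrix with rows `(0,4,0,0,0,0)`, `(0,2,1,1,0,0)`,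
`(0,1,1,1,1,0)`, `(0,0,2,2,0,0)`, `(0,0,1,1,2,0)`, `(0,0,0,0,4,0)`. -/
theorem stmt18 :
    ∀ (k l : Fin 6) (x : ZMod 4 → Bool), (∃ σ ∈ dihedral4, x = reps k ∘ σ) →
      ∑ y ∈ Finset.univ.filter (fun y => ∃ σ ∈ dihedral4, y = reps l ∘ σ),
        gameA'4 x y =
      (1 / 4) *
        ![![(0 : ℝ), 4, 0, 0, 0, 0], ![0, 2, 1, 1, 0, 0], ![0, 1, 1, 1, 1, 0],
          ![0, 0, 2, 2, 0, 0], ![0, 0, 1, 1, 2, 0], ![0, 0, 0, 0, 4, 0]] k l := by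
  intro k l x hx
  have hk : orbclass x = k := (orbit_iff k x).mp hx
  have hfil : Finset.univ.filter (fun y => ∃ σ ∈ dihedral4, y = reps l ∘ σ)
      = Finset.univ.filter (fun y => orbclass y = l) := by
    apply Finset.filter_congr
    intro y _
    simp [orbit_iff]
  rw [hfil]
  have : ∑ y ∈ Finset.univ.filter (fun y => orbclass y = l), gameA'4 x y
      = ((∑ y ∈ Finset.univ.filter (fun y => orbclass y = l), cntA x y : ℕ) : ℝ) / 8 := by
    rw [Nat.cast_sum, Finset.sum_div]
    exact Finset.sum_congr rfl fun y _ => gameA'4_eq x y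
  rw [this, key, hk]
  have hm : ((2 * mNat k l : ℕ) : ℝ) / 8 = (mNat k l : ℝ) / 4 := by
    push_cast; ring
  rw [hm]
  fin_cases k <;> fin_cases l <;> norm_num [mNat]
end
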